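/- arXiv:2602.07331 — 2 statements merged into one kernel-verified Lean document; each statement's English description precedes it below -/
import Mathlib

section
/- The Heawood graph is not cycle-conformal: it contains an even cycle C of length 8 such that the Heawood graph minus V(C) has no perfect matching. -/
/-!
Deleting the 8-cycle 0–1–2–3–4–9–8–13 from the Heawood graph leaves the vertices 5 and 7 with
the single neighbour 6, so no perfect matching can cover both of them.
-/

open SimpleGraph

/-- A graph has a perfect matching. -/
def hasPM {V : Type*} (G : SimpleGraph V) : Prop :=
  ∃ M : G.Subgraph, M.IsPerfectMatching

/-- The graph obtained from `G` by deleting the vertices in `s`. -/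
def delVerts {V : Type*} (G : SimpleGraph V) (s : Set V) : SimpleGraph ↥(sᶜ) :=
  G.induce sᶜ

/-- A graph is cycle-conformal if it has a perfect matching and deleting the
vertex set of any even cycle leaves a graph with a perfect matching. -/
def cycleConformal {V : Type*} (G : SimpleGraph V) : Prop :=
  hasPM G ∧ ∀ (v : V) (c : G.Walk v v), c.IsCycle → Even c.length →
    hasPM (delVerts G {x | x ∈ c.support})

/-- The Heawood graph: vertices `0, …, 13` arranged in a 14-cycle, with a chord
from `i` to `i + 5 (mod 14)` for each even `i`. -/
def heawoodGraph : SimpleGraph (Fin 14) :=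
  SimpleGraph.fromRel (fun a b => b = a + 1 ∨ (Even (a : ℕ) ∧ b = a + 5))

theorem not_hasPM_of_adj_eq_of_adj_eq {V : Type*} {G : SimpleGraph V} {u w x : V} (huw : u ≠ w)
    (hu : ∀ y, G.Adj u y → y = x) (hw : ∀ y, G.Adj w y → y = x) : ¬ hasPM G := by
  rintro ⟨M, hM⟩
  obtain ⟨a, hua, -⟩ := hM.1 (hM.2 u)
  obtain ⟨b, hwb, -⟩ := hM.1 (hM.2 w)
  obtain rfl : a = x := hu a (M.adj_sub hua)
  obtain rfl : b = a := hw b (M.adj_sub hwb)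
  exact huw (hM.1.eq_of_adj_right hua hwb)

instance : DecidableRel heawoodGraph.Adj := fun a b =>
  decidable_of_iff _ (fromRel_adj _ a b).symm

def heawoodCycle : heawoodGraph.Walk 0 0 :=
  .cons (by decide : heawoodGraph.Adj 0 1) <| .cons (by decide : heawoodGraph.Adj 1 2) <|
  .cons (by decide : heawoodGraph.Adj 2 3) <| .cons (by decide : heawoodGraph.Adj 3 4) <|
  .cons (by decide : heawoodGraph.Adj 4 9) <| .cons (by decide : heawoodGraph.Adj 9 8) <|
  .cons (by decide : heawoodGraph.Adj 8 13) <| .cons (by decide : heawoodGraph.Adj 13 0) .nil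

theorem heawoodCycle_isCycle : heawoodCycle.IsCycle :=
  (Walk.cons_isCycle_iff _ _).2 ⟨(Walk.isPath_def _).2 (by decide), by decide⟩

theorem heawoodCycle_length : heawoodCycle.length = 8 := rfl

theorem heawood_adj_eq_six_of_not_mem_support {u y : Fin 14} (hu : u = 5 ∨ u = 7)
    (hy : y ∉ heawoodCycle.support) (huy : heawoodGraph.Adj u y) : y = 6 := by
  revert u y
  decide

theorem delVerts_heawoodCycle_not_hasPM :
    ¬ hasPM (delVerts heawoodGraph {x | x ∈ heawoodCycle.support}) := by
  have h5 : (5 : Fin 14) ∉ heawoodCycle.support := by decide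
  have h6 : (6 : Fin 14) ∉ heawoodCycle.support := by decide
  have h7 : (7 : Fin 14) ∉ heawoodCycle.support := by decide
  refine not_hasPM_of_adj_eq_of_adj_eq (u := ⟨5, h5⟩) (w := ⟨7, h7⟩) (x := ⟨6, h6⟩)
    (Subtype.coe_ne_coe.1 (by decide : (5 : Fin 14) ≠ 7)) ?_ ?_
  · exact fun y hy ↦ Subtype.ext <| heawood_adj_eq_six_of_not_mem_support (.inl rfl) y.2 hy
  · exact fun y hy ↦ Subtype.ext <| heawood_adj_eq_six_of_not_mem_support (.inr rfl) y.2 hy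

/-- The Heawood graph is not cycle-conformal: it contains an (even) cycle of
length 8 whose vertex deletion leaves a graph with no perfect matching. -/
theorem heawood_not_cycleConformal :
    ∃ (v : Fin 14) (c : heawoodGraph.Walk v v),
      c.IsCycle ∧ c.length = 8 ∧
      ¬ hasPM (delVerts heawoodGraph {x | x ∈ c.support}) :=
  ⟨0, heawoodCycle, heawoodCycle_isCycle, heawoodCycle_length, delVerts_heawoodCycle_not_hasPM⟩
end

section
/- Let G be a cubic, matching covered, bipartite graph with a tight cut ∂(X) such that ∂(X) is an induced matching consisting of exactly 3 edges, and let G₁ and G₂ be the two tight cut contractions associated with ∂(X). If G₁ and G₂ are both cycle-conformal, then G is cycle-conformal. -/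
open SimpleGraph

/-- A graph is matching covered if it has at least 4 vertices, is connected,
has a perfect matching, and every edge lies in some perfect matching. -/
def matchingCovered {V : Type*} (G : SimpleGraph V) : Prop :=
  4 ≤ Nat.card V ∧ G.Connected ∧ hasPM G ∧
    ∀ e ∈ G.edgeSet, ∃ M : G.Subgraph, M.IsPerfectMatching ∧ e ∈ M.edgeSet

/-- The edge cut `∂(X)`: edges of `G` with exactly one endpoint in `X`. -/
def cutSet {V : Type*} (G : SimpleGraph V) (X : Set V) : Set (Sym2 V) :=
  {e | ∃ a b : V, e = s(a, b) ∧ G.Adj a b ∧ a ∈ X ∧ b ∉ X}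

/-- A cut `∂(X)` is tight if every perfect matching of `G` contains exactly
one of its edges. -/
def tightCut {V : Type*} (G : SimpleGraph V) (X : Set V) : Prop :=
  ∀ M : G.Subgraph, M.IsPerfectMatching →
    ∃! e : Sym2 V, e ∈ M.edgeSet ∧ e ∈ cutSet G X

/-- The tight cut contraction `G[X ↦ c]`: the set `X` is contracted to the
single new vertex `Sum.inr ()`, loops and parallel edges being removed. -/
def contractSet {V : Type*} (G : SimpleGraph V) (X : Set V) :
    SimpleGraph ({v : V // v ∉ X} ⊕ Unit) :=
  SimpleGraph.fromRel (fun a b =>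
    (∃ u w : {v : V // v ∉ X}, a = Sum.inl u ∧ b = Sum.inl w ∧ G.Adj u w) ∨
    (∃ (u : {v : V // v ∉ X}) (x : V), x ∈ X ∧ a = Sum.inl u ∧ b = Sum.inr () ∧
      G.Adj u x))

/-!
An even cycle `C` of `G` crosses the cut `∂(X)` an even number of times, and at most three, so
zero or two times. If it does not cross, it lies on one side, say outside `X`, and is an even
cycle of `G[X ↦ c]`; a perfect matching of `G[X ↦ c] - C` matches `c` along some cut edge `e`,
and by tightness a perfect matching of `G` through `e` completes it inside `X`. If it crosses
twice, it splits into a path `P` outside `X` and a path `Q` inside `X`, whose ends are distinct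
because the cut is an induced matching; they close up through the contracted vertex into cycles
of `G[X ↦ c]` and `G[X̄ ↦ c]`. Both are even: counting colours on the shore of a tight cut of a
bipartite matching covered graph shows that every cut edge leaves `X` from the same colour
class, so `Q` has even length. Perfect matchings of the two contractions minus these cycles
together form a perfect matching of `G - C`.
-/

namespace SimpleGraph

variable {V : Type*} {G : SimpleGraph V} {Y : Set V}

lemma mem_cutSet_iff {u w : V} :
    s(u, w) ∈ cutSet G Y ↔ G.Adj u w ∧ ¬(u ∈ Y ↔ w ∈ Y) := by
  constructor
  · rintro ⟨a, b, he, hab, ha, hb⟩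
    rcases Sym2.eq_iff.1 he with ⟨rfl, rfl⟩ | ⟨rfl, rfl⟩
    · exact ⟨hab, by tauto⟩
    · exact ⟨hab.symm, by tauto⟩
  · rintro ⟨huw, hY⟩
    by_cases hu : u ∈ Y
    · exact ⟨u, w, rfl, huw, hu, by tauto⟩
    · exact ⟨w, u, Sym2.eq_swap, huw.symm, by tauto, hu⟩

lemma cutSet_compl : cutSet G Yᶜ = cutSet G Y := by
  ext e
  induction e using Sym2.ind with
  | _ u w => simp only [mem_cutSet_iff, Set.mem_compl_iff, not_iff_not]

lemma tightCut.compl (ht : tightCut G Y) : tightCut G Yᶜ := by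
  rwa [tightCut, cutSet_compl]

lemma tightCut.mem_of_adj (ht : tightCut G Y) {M : G.Subgraph} (hM : M.IsPerfectMatching)
    {a b u w : V} (hab : M.Adj a b) (hcut : s(a, b) ∈ cutSet G Y) (huw : M.Adj u w)
    (hne : s(u, w) ≠ s(a, b)) (hu : u ∈ Y) : w ∈ Y := by
  by_contra hw
  obtain ⟨e, -, he⟩ := ht M hM
  have hcut' : s(u, w) ∈ cutSet G Y := mem_cutSet_iff.2 ⟨M.adj_sub huw, by tauto⟩
  exact hne ((he _ ⟨huw, hcut'⟩).trans (he _ ⟨hab, hcut⟩).symm)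

lemma Subgraph.IsPerfectMatching.isMatching_induce {M : G.Subgraph} (hM : M.IsPerfectMatching)
    {U : Set V} (hU : ∀ u ∈ U, ∀ w, M.Adj u w → w ∈ U) : (M.induce U).IsMatching := by
  intro u hu
  obtain ⟨w, huw, hw⟩ := hM.1 (hM.2 u)
  exact ⟨w, ⟨hu, hU u hu w huw, huw⟩, fun w' h => hw w' h.2.2⟩

lemma Subgraph.IsMatching.ncard_inter_color_eq {M : G.Subgraph} (hM : M.IsMatching)
    (c : G.Coloring Bool) (β : Bool) :
    (M.verts ∩ {v | c v = β}).ncard = (M.verts ∩ {v | c v = !β}).ncard := by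
  have hpartner (v) (hv : v ∈ M.verts) : M.Adj v (hM hv).choose := (hM hv).choose_spec.1
  have hcolor {v w} (h : M.Adj v w) : c w = !c v := by
    have := c.valid (M.adj_sub h)
    cases hv : c v <;> cases hw : c w <;> simp_all
  refine Set.ncard_congr (fun v hv => (hM hv.1).choose) (fun v hv => ?_) (fun v w hv hw h => ?_)
    (fun w hw => ?_)
  · exact ⟨M.edge_vert (hpartner v hv.1).symm,
      by simp [hcolor (hpartner v hv.1), show c v = β from hv.2]⟩
  · exact hM.eq_of_adj_right (hpartner v hv.1) (h ▸ hpartner w hw.1)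
  · obtain ⟨v, hwv, -⟩ := hM hw.1
    refine ⟨v, ⟨M.edge_vert hwv.symm, by simp [hcolor hwv, show c w = !β from hw.2]⟩, ?_⟩
    exact hM.eq_of_adj_left (hpartner v (M.edge_vert hwv.symm)) hwv.symm

lemma tightCut.ncard_inter_color [Finite V] (ht : tightCut G Y) (c : G.Coloring Bool)
    {M : G.Subgraph} (hM : M.IsPerfectMatching) {a b : V} (hab : M.Adj a b) (ha : a ∈ Y)
    (hb : b ∉ Y) :
    (Y ∩ {v | c v = c a}).ncard = (Y ∩ {v | c v = !c a}).ncard + 1 := by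
  have hcut : s(a, b) ∈ cutSet G Y := mem_cutSet_iff.2 ⟨M.adj_sub hab, by tauto⟩
  have hclosed : ∀ u ∈ Y \ {a}, ∀ w, M.Adj u w → w ∈ Y \ {a} := by
    rintro u ⟨hu, hua : u ≠ a⟩ w huw
    have hub : u ≠ b := fun h => hb (h ▸ hu)
    refine ⟨ht.mem_of_adj hM hab hcut huw (by simp [hua, hub]) hu, ?_⟩
    rintro rfl
    exact hub (hM.1.eq_of_adj_right huw hab.symm)
  have hbal := (hM.isMatching_induce hclosed).ncard_inter_color_eq c (c a)
  simp only [Subgraph.induce_verts] at hbal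
  have hsplit : Y ∩ {v | c v = c a} = insert a ((Y \ {a}) ∩ {v | c v = c a}) := by
    ext v
    by_cases hva : v = a <;> simp [hva, ha]
  have hother : Y ∩ {v | c v = !c a} = (Y \ {a}) ∩ {v | c v = !c a} := by
    ext v
    by_cases hva : v = a <;> simp [hva]
  rw [hsplit, hother, Set.ncard_insert_of_notMem (by simp), hbal]

lemma tightCut.color_eq [Finite V] (ht : tightCut G Y)
    (hcover : ∀ e ∈ G.edgeSet, ∃ M : G.Subgraph, M.IsPerfectMatching ∧ e ∈ M.edgeSet)
    (c : G.Coloring Bool) {a b a' b' : V} (hab : G.Adj a b) (ha : a ∈ Y) (hb : b ∉ Y)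
    (hab' : G.Adj a' b') (ha' : a' ∈ Y) (hb' : b' ∉ Y) : c a = c a' := by
  obtain ⟨M, hM, habM : M.Adj a b⟩ := hcover s(a, b) hab
  obtain ⟨M', hM', habM' : M'.Adj a' b'⟩ := hcover s(a', b') hab'
  have h := ht.ncard_inter_color c hM habM ha hb
  have h' := ht.ncard_inter_color c hM' habM' ha' hb'
  by_contra hne
  rw [Bool.eq_not_iff.2 (Ne.symm hne), Bool.not_not] at h'
  omega

namespace Walk

variable {u v : V}

lemma exists_eq_append_cons_of_exists_mem (p : G.Walk u v) (hu : u ∉ Y)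
    (hY : ∃ w ∈ p.support, w ∈ Y) :
    ∃ (b a : V) (h : G.Adj b a) (q : G.Walk u b) (r : G.Walk a v),
      p = q.append (cons h r) ∧ a ∈ Y ∧ ∀ w ∈ q.support, w ∉ Y := by
  induction p with
  | nil => simp_all
  | @cons x y z h p ih =>
    by_cases hy : y ∈ Y
    · exact ⟨x, y, h, nil, p, rfl, hy, by simpa using hu⟩
    · obtain ⟨b, a, hba, q, r, rfl, ha, hq⟩ :=
        ih hy (by simpa [hu] using hY)
      exact ⟨b, a, hba, cons h q, r, rfl, ha, by simpa [hu] using hq⟩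

lemma notMem_of_forall_notMem_cutSet (p : G.Walk u v) (hu : u ∉ Y)
    (hp : ∀ e ∈ p.edges, e ∉ cutSet G Y) : ∀ w ∈ p.support, w ∉ Y := by
  induction p with
  | nil => simpa using hu
  | @cons x y z h p ih =>
    have hy : y ∉ Y := fun hy => hp _ (by simp) (mem_cutSet_iff.2 ⟨h, by tauto⟩)
    simpa [hu] using ih hy fun e he => hp e (by simp [he])

section countP

variable [DecidablePred (· ∈ cutSet G Y)]

lemma even_countP_cutSet_iff (p : G.Walk u v) :
    Even (p.edges.countP (· ∈ cutSet G Y)) ↔ (u ∈ Y ↔ v ∈ Y) := by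
  induction p with
  | nil => simp
  | @cons x y z h p ih =>
    by_cases hc : s(x, y) ∈ cutSet G Y
    · have := (mem_cutSet_iff.1 hc).2
      simp only [edges_cons, List.countP_cons, hc, decide_true, if_true,
        Nat.even_add_one, ih]
      tauto
    · have := mem_cutSet_iff.not.1 hc
      simp only [edges_cons, List.countP_cons, hc, decide_false]
      tauto

lemma countP_cutSet_le (p : G.Walk u v) (hp : p.edges.Nodup) (hfin : (cutSet G Y).Finite) :
    p.edges.countP (· ∈ cutSet G Y) ≤ (cutSet G Y).ncard := by
  classical
  rw [List.countP_eq_length_filter, ← List.toFinset_card_of_nodup (hp.filter _),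
    ← Set.ncard_coe_finset]
  exact Set.ncard_le_ncard (fun e he => (by simpa using he : _ ∧ _).2) hfin

end countP

lemma IsCycle.append_comm {u v : V} {p : G.Walk u v} {q : G.Walk v u}
    (h : (p.append q).IsCycle) : (q.append p).IsCycle := by
  rw [isCycle_def, isTrail_def] at h ⊢
  obtain ⟨htrail, hne, hnodup⟩ := h
  refine ⟨?_, fun hnil => hne ?_, ?_⟩
  · rw [edges_append] at htrail ⊢
    exact List.perm_append_comm.nodup_iff.1 htrail
  · have := congrArg length hnil
    rw [length_append, length_nil] at this
    rw [eq_nil_iff_nil, ← length_eq_zero_iff, length_append]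
    omega
  · rw [tail_support_append] at hnodup ⊢
    exact List.perm_append_comm.nodup_iff.1 hnodup

/-- The cycle crosses the cut an even number of times (it starts outside `Y`) and at most three
times, hence exactly twice. -/
lemma IsCycle.exists_cons_append_cons {v : V} {C : G.Walk v v} (hC : C.IsCycle) (hv : v ∉ Y)
    (hY : ∃ w ∈ C.support, w ∈ Y) (hfin : (cutSet G Y).Finite) (hcard : (cutSet G Y).ncard < 4) :
    ∃ (a₁ b₁ a₂ b₂ : V) (h₁ : G.Adj b₁ a₁) (h₂ : G.Adj a₂ b₂) (Q : G.Walk a₁ a₂)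
      (P : G.Walk b₂ b₁), (cons h₁ (Q.append (cons h₂ P))).IsCycle ∧
      C.length = Q.length + P.length + 2 ∧
      (∀ w, w ∈ C.support ↔ w ∈ Q.support ∨ w ∈ P.support) ∧
      (∀ w ∈ Q.support, w ∈ Y) ∧ ∀ w ∈ P.support, w ∉ Y := by
  classical
  obtain ⟨b₁, a₁, h₁, q, r, rfl, ha₁, hq⟩ := C.exists_eq_append_cons_of_exists_mem hv hY
  have hb₁ : b₁ ∉ Y := hq b₁ q.end_mem_support
  obtain ⟨a₂, b₂, h₂, Q, P, hrq, hb₂, hQ⟩ := (r.append q).exists_eq_append_cons_of_exists_mem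
    (Y := Yᶜ) (not_not.2 ha₁) ⟨b₁, (r.append q).end_mem_support, hb₁⟩
  replace hb₂ : b₂ ∉ Y := hb₂
  have hQY : ∀ w ∈ Q.support, w ∈ Y := fun w hw => not_not.1 (hQ w hw)
  have ha₂ : a₂ ∈ Y := hQY a₂ Q.end_mem_support
  have hcyc : (cons h₁ (Q.append (cons h₂ P))).IsCycle := hrq ▸ hC.append_comm
  have hcount := countP_cutSet_le _ hcyc.edges_nodup hfin
  have hQeven := (even_countP_cutSet_iff (Y := Y) Q).2 (iff_of_true ha₁ ha₂)
  have hPeven := (even_countP_cutSet_iff (Y := Y) P).2 (iff_of_false hb₂ hb₁)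
  have hcross₁ : s(b₁, a₁) ∈ cutSet G Y := mem_cutSet_iff.2 ⟨h₁, by tauto⟩
  have hcross₂ : s(a₂, b₂) ∈ cutSet G Y := mem_cutSet_iff.2 ⟨h₂, by tauto⟩
  simp only [edges_cons, edges_append, List.countP_cons, List.countP_append, hcross₁,
    hcross₂, decide_true, if_true] at hcount
  have hP0 : P.edges.countP (· ∈ cutSet G Y) = 0 := by
    obtain ⟨k, hk⟩ := hQeven
    obtain ⟨l, hl⟩ := hPeven
    omega
  refine ⟨a₁, b₁, a₂, b₂, h₁, h₂, Q, P, hcyc, ?_, fun w => ?_, hQY,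
    P.notMem_of_forall_notMem_cutSet hb₂ (by simpa using hP0)⟩
  · have := congrArg length hrq
    simp only [length_append, length_cons] at this ⊢
    omega
  · have := congrArg (w ∈ ·.support) hrq
    simp only [mem_support_append_iff, support_cons, List.mem_cons] at this ⊢
    have hb : w = b₁ → w ∈ q.support := fun h => h ▸ q.end_mem_support
    have ha : w = a₂ → w ∈ Q.support := fun h => h ▸ Q.end_mem_support
    rw [eq_iff_iff] at this
    tauto

end Walk

end SimpleGraph

namespace contractSet

variable {V : Type*} {G : SimpleGraph V} {Y : Set V}

@[simp]
lemma adj_inl_inl {u w : {v : V // v ∉ Y}} :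
    (contractSet G Y).Adj (.inl u) (.inl w) ↔ G.Adj u w := by
  simp only [contractSet, fromRel_adj]
  constructor
  · rintro ⟨-, (⟨_, _, hu, hw, h⟩ | ⟨-, -, -, -, h, -⟩) | (⟨_, _, hu, hw, h⟩ | ⟨-, -, -, -, h, -⟩)⟩
    all_goals simp_all [G.adj_comm]
  · intro h
    exact ⟨by simpa [Subtype.ext_iff] using h.ne, .inl (.inl ⟨u, w, rfl, rfl, h⟩)⟩

@[simp]
lemma adj_inl_inr {u : {v : V // v ∉ Y}} :
    (contractSet G Y).Adj (.inl u) (.inr ()) ↔ ∃ x ∈ Y, G.Adj u x := by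
  simp only [contractSet, exists_and_left, Subtype.exists, exists_and_right, fromRel_adj, ne_eq,
    reduceCtorEq, not_false_eq_true, Sum.inl.injEq, exists_false, false_and, and_false, true_and,
    false_or, and_self, or_self, or_false]
  constructor
  · rintro ⟨_, -, x, hx, rfl, h⟩
    exact ⟨x, hx, h⟩
  · rintro ⟨x, hx, h⟩
    exact ⟨u, u.2, x, hx, rfl, h⟩

def inlEmbedding : G.induce Yᶜ ↪g contractSet G Y where
  toFun u := .inl ⟨u.1, u.2⟩
  inj' _ _ h := Subtype.ext (congrArg Subtype.val (Sum.inl_injective h))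
  map_rel_iff' := adj_inl_inl

end contractSet

namespace SimpleGraph.Walk

variable {V : Type*} {G : SimpleGraph V} {Y : Set V} {u v : V}

def toContractSet (p : G.Walk u v) (hp : ∀ w ∈ p.support, w ∉ Y) :
    (contractSet G Y).Walk (.inl ⟨u, hp u p.start_mem_support⟩)
      (.inl ⟨v, hp v p.end_mem_support⟩) :=
  (p.induce Yᶜ hp).map contractSet.inlEmbedding.toHom

section

variable (p : G.Walk u v) (hp : ∀ w ∈ p.support, w ∉ Y)

@[simp]
lemma length_toContractSet : (p.toContractSet hp).length = p.length :=
  (length_map _ _).trans <| (length_map _ _).symm.trans <|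
    congrArg length (p.map_induce (s := Yᶜ) hp)

@[simp]
lemma inl_mem_support_toContractSet {w : V} (hw : w ∉ Y) :
    .inl ⟨w, hw⟩ ∈ (p.toContractSet hp).support ↔ w ∈ p.support := by
  simp [toContractSet, contractSet.inlEmbedding]

@[simp]
lemma inr_notMem_support_toContractSet : .inr () ∉ (p.toContractSet hp).support := by
  simp [toContractSet, contractSet.inlEmbedding]

end

lemma IsPath.toContractSet {p : G.Walk u v} (hpath : p.IsPath) (hp : ∀ w ∈ p.support, w ∉ Y) :
    (p.toContractSet hp).IsPath :=
  .map (contractSet.inlEmbedding (G := G)).injective <|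
    (isPath_map_iff_of_injective (Embedding.induce (G := G) Yᶜ).injective).1
      (by rwa [map_induce])

lemma IsCycle.toContractSet {p : G.Walk u u} (hcyc : p.IsCycle) (hp : ∀ w ∈ p.support, w ∉ Y) :
    (p.toContractSet hp).IsCycle :=
  (isCycle_map_iff_of_injective (contractSet.inlEmbedding (G := G)).injective).2 <|
    (isCycle_map_iff_of_injective (Embedding.induce (G := G) Yᶜ).injective).1
      (by rwa [map_induce])

lemma IsPath.exists_isCycle_contractSet {u₁ u₂ x₁ x₂ : V} {P : G.Walk u₁ u₂} (hP : P.IsPath)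
    (hPY : ∀ w ∈ P.support, w ∉ Y) (hne : u₁ ≠ u₂) (hx₁ : x₁ ∈ Y) (hx₂ : x₂ ∈ Y)
    (h₁ : G.Adj u₁ x₁) (h₂ : G.Adj u₂ x₂) :
    ∃ W : (contractSet G Y).Walk (.inr ()) (.inr ()), W.IsCycle ∧ W.length = P.length + 2 ∧
      ∀ w (hw : w ∉ Y), .inl ⟨w, hw⟩ ∈ W.support ↔ w ∈ P.support := by
  have e₁ : (contractSet G Y).Adj (.inr ()) (.inl ⟨u₁, hPY u₁ P.start_mem_support⟩) :=
    (contractSet.adj_inl_inr.2 ⟨x₁, hx₁, h₁⟩).symm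
  have e₂ : (contractSet G Y).Adj (.inl ⟨u₂, hPY u₂ P.end_mem_support⟩) (.inr ()) :=
    contractSet.adj_inl_inr.2 ⟨x₂, hx₂, h₂⟩
  refine ⟨cons e₁ ((P.toContractSet hPY).concat e₂), ?_, by simp, fun w hw => by simp⟩
  refine (cons_isCycle_iff _ _).2 ⟨(hP.toContractSet hPY).concat (by simp) e₂, ?_⟩
  simp only [edges_concat, List.concat_eq_append, List.mem_append, List.mem_singleton, not_or]
  exact ⟨fun h => inr_notMem_support_toContractSet P hPY (fst_mem_support_of_mem_edges _ h),
    by simp [hne]⟩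

end SimpleGraph.Walk

namespace SimpleGraph

variable {V : Type*} {G : SimpleGraph V} {Y : Set V}

lemma hasPM_delVerts_iff {S : Set V} :
    hasPM (delVerts G S) ↔ ∃ M : G.Subgraph, M.IsMatching ∧ M.verts = Sᶜ := by
  unfold hasPM delVerts
  constructor
  · rintro ⟨M, hM⟩
    refine ⟨M.map (Embedding.induce (G := G) Sᶜ).toHom,
      hM.1.map _ (Embedding.induce (G := G) Sᶜ).injective, ?_⟩
    rw [Subgraph.map_verts, hM.2.verts_eq_univ, Set.image_univ]
    exact Subtype.range_coe
  · rintro ⟨M, hM, hverts⟩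
    refine ⟨M.comap (Embedding.induce (G := G) Sᶜ).toHom,
      Subgraph.isPerfectMatching_iff.2 fun p => ?_⟩
    obtain ⟨w, hpw, hw⟩ := hM (by rw [hverts]; exact p.2 : p.1 ∈ M.verts)
    refine ⟨⟨w, hverts ▸ M.edge_vert hpw.symm⟩, ⟨M.adj_sub hpw, hpw⟩, ?_⟩
    exact fun q hq => Subtype.ext (hw _ hq.2)

def Subgraph.ofContractSet (N : (contractSet G Y).Subgraph) : G.Subgraph where
  verts := {u | ∃ (hu : u ∉ Y) (w : {v // v ∉ Y}), N.Adj (.inl ⟨u, hu⟩) (.inl w)}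
  Adj u w := ∃ (hu : u ∉ Y) (hw : w ∉ Y), N.Adj (.inl ⟨u, hu⟩) (.inl ⟨w, hw⟩)
  adj_sub := fun ⟨_, _, h⟩ => contractSet.adj_inl_inl.1 (N.adj_sub h)
  edge_vert := fun ⟨hu, hw, h⟩ => ⟨hu, ⟨_, hw⟩, h⟩
  symm := ⟨fun _ _ ⟨hu, hw, h⟩ => ⟨hw, hu, h.symm⟩⟩

namespace Subgraph

variable {N : (contractSet G Y).Subgraph}

lemma mem_ofContractSet_verts {u : V} :
    u ∈ N.ofContractSet.verts ↔ ∃ (hu : u ∉ Y) (w : {v // v ∉ Y}), N.Adj (.inl ⟨u, hu⟩) (.inl w) :=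
  Iff.rfl

lemma ofContractSet_adj {u w : V} :
    N.ofContractSet.Adj u w ↔ ∃ (hu : u ∉ Y) (hw : w ∉ Y), N.Adj (.inl ⟨u, hu⟩) (.inl ⟨w, hw⟩) :=
  Iff.rfl

lemma ofContractSet_verts_subset : N.ofContractSet.verts ⊆ Yᶜ :=
  fun _ ⟨hu, _⟩ => hu

lemma IsMatching.ofContractSet (hN : N.IsMatching) : N.ofContractSet.IsMatching := by
  intro u hu
  obtain ⟨hu, w, huw⟩ := mem_ofContractSet_verts.1 hu
  refine ⟨w, ⟨hu, w.2, huw⟩, fun y hy => ?_⟩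
  obtain ⟨_, hy, h⟩ := ofContractSet_adj.1 hy
  exact congrArg Subtype.val (Sum.inl_injective (hN.eq_of_adj_left h huw))

lemma IsMatching.mem_ofContractSet_verts_iff (hN : N.IsMatching) {u : V} (hu : u ∉ Y) :
    u ∈ N.ofContractSet.verts ↔ .inl ⟨u, hu⟩ ∈ N.verts ∧ ¬N.Adj (.inl ⟨u, hu⟩) (.inr ()) := by
  rw [mem_ofContractSet_verts]
  constructor
  · rintro ⟨_, w, h⟩
    exact ⟨N.edge_vert h, fun h' => by simpa using hN.eq_of_adj_left h h'⟩
  · rintro ⟨hmem, hinr⟩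
    obtain ⟨z, hz, -⟩ := hN hmem
    rcases z with w | ⟨⟩
    · exact ⟨hu, w, hz⟩
    · exact absurd hz hinr

lemma IsMatching.mem_ofContractSet_verts_iff_of_verts_eq (hN : N.IsMatching)
    {T : Set ({v : V // v ∉ Y} ⊕ Unit)} (hverts : N.verts = Tᶜ) (hinr : .inr () ∈ T) {u : V}
    (hu : u ∉ Y) :
    u ∈ N.ofContractSet.verts ↔ .inl ⟨u, hu⟩ ∉ T := by
  rw [hN.mem_ofContractSet_verts_iff hu, hverts]
  exact and_iff_left fun h => (by simpa [hverts] using N.edge_vert h.symm : _ ∉ T) hinr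

end Subgraph

lemma hasPM_delVerts_of_contractSet_inr_mem {S : Set V} {T₁ : Set ({v : V // v ∉ Y} ⊕ Unit)}
    {T₂ : Set ({v : V // v ∉ Yᶜ} ⊕ Unit)} (hinr₁ : .inr () ∈ T₁) (hinr₂ : .inr () ∈ T₂)
    (hT₁ : ∀ w (hw : w ∉ Y), .inl ⟨w, hw⟩ ∈ T₁ ↔ w ∈ S)
    (hT₂ : ∀ w (hw : w ∉ Yᶜ), .inl ⟨w, hw⟩ ∈ T₂ ↔ w ∈ S)
    (hM₁ : hasPM (delVerts (contractSet G Y) T₁)) (hM₂ : hasPM (delVerts (contractSet G Yᶜ) T₂)) :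
    hasPM (delVerts G S) := by
  obtain ⟨N₁, hN₁, hv₁⟩ := hasPM_delVerts_iff.1 hM₁
  obtain ⟨N₂, hN₂, hv₂⟩ := hasPM_delVerts_iff.1 hM₂
  have hdisj : Disjoint N₁.ofContractSet.verts N₂.ofContractSet.verts :=
    Set.disjoint_left.2 fun _ h₁ h₂ =>
      Subgraph.ofContractSet_verts_subset h₂ (Subgraph.ofContractSet_verts_subset h₁)
  refine hasPM_delVerts_iff.2 ⟨_, hN₁.ofContractSet.sup hN₂.ofContractSet ?_, ?_⟩
  · rwa [hN₁.ofContractSet.support_eq_verts, hN₂.ofContractSet.support_eq_verts]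
  ext u
  rw [Subgraph.verts_sup, Set.mem_union]
  by_cases hu : u ∈ Y
  · have hu' : u ∉ Yᶜ := not_not.2 hu
    have h₁ : u ∉ N₁.ofContractSet.verts := fun h => Subgraph.ofContractSet_verts_subset h hu
    rw [hN₂.mem_ofContractSet_verts_iff_of_verts_eq hv₂ hinr₂ hu', hT₂ u hu']
    simp only [h₁, false_or, Set.mem_compl_iff]
  · have h₂ : u ∉ N₂.ofContractSet.verts := fun h => Subgraph.ofContractSet_verts_subset h hu
    rw [hN₁.mem_ofContractSet_verts_iff_of_verts_eq hv₁ hinr₁ hu, hT₁ u hu]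
    simp only [h₂, or_false, Set.mem_compl_iff]

/-- A perfect matching of `G[Y ↦ c] - T` matches `c` along some cut edge; by tightness a perfect
matching of `G` through that edge supplies the rest inside `Y`. -/
lemma hasPM_delVerts_of_contractSet_inr_notMem (ht : tightCut G Y)
    (hcover : ∀ e ∈ G.edgeSet, ∃ M : G.Subgraph, M.IsPerfectMatching ∧ e ∈ M.edgeSet)
    {S : Set V} {T : Set ({v : V // v ∉ Y} ⊕ Unit)} (hinr : .inr () ∉ T)
    (hT : ∀ w (hw : w ∉ Y), .inl ⟨w, hw⟩ ∈ T ↔ w ∈ S) (hSY : ∀ w ∈ S, w ∉ Y)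
    (hM : hasPM (delVerts (contractSet G Y) T)) : hasPM (delVerts G S) := by
  obtain ⟨N, hN, hv⟩ := hasPM_delVerts_iff.1 hM
  obtain ⟨z, hz, -⟩ := hN (by rw [hv]; exact hinr : .inr () ∈ N.verts)
  rcases z with ⟨u₀, hu₀Y⟩ | ⟨⟩
  swap
  · exact absurd rfl (N.adj_sub hz).ne
  obtain ⟨x₀, hx₀, hux⟩ := contractSet.adj_inl_inr.1 (N.adj_sub hz.symm)
  obtain ⟨M₀, hM₀, hM₀ux : M₀.Adj u₀ x₀⟩ := hcover s(u₀, x₀) hux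
  have hcut : s(u₀, x₀) ∈ cutSet G Y := mem_cutSet_iff.2 ⟨hux, by tauto⟩
  have hclosed : ∀ u ∈ insert u₀ Y, ∀ w, M₀.Adj u w → w ∈ insert u₀ Y := by
    intro u hu w huw
    by_cases he : s(u, w) = s(u₀, x₀)
    · rcases Sym2.eq_iff.1 he with ⟨-, rfl⟩ | ⟨-, rfl⟩
      · exact Or.inr hx₀
      · exact Or.inl rfl
    rcases hu with rfl | hu
    · exact absurd (by rw [hM₀.1.eq_of_adj_left huw hM₀ux]) he
    · exact Or.inr (ht.mem_of_adj hM₀ hM₀ux hcut huw he hu)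
  have hmem (u : V) (hu : u ∉ Y) (hne : u ≠ u₀) : u ∈ N.ofContractSet.verts ↔ u ∉ S := by
    rw [hN.mem_ofContractSet_verts_iff hu, hv, Set.mem_compl_iff, hT u hu]
    refine and_iff_left fun h => hne ?_
    simpa using hN.eq_of_adj_right h hz.symm
  have hu₀ : u₀ ∉ N.ofContractSet.verts :=
    fun h => ((hN.mem_ofContractSet_verts_iff hu₀Y).1 h).2 hz.symm
  refine hasPM_delVerts_iff.2 ⟨_, hN.ofContractSet.sup (hM₀.isMatching_induce hclosed) ?_, ?_⟩
  · rw [hN.ofContractSet.support_eq_verts, (hM₀.isMatching_induce hclosed).support_eq_verts,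
      Subgraph.induce_verts]
    refine Set.disjoint_left.2 fun u h h' => ?_
    rcases h' with rfl | h'
    · exact hu₀ h
    · exact Subgraph.ofContractSet_verts_subset h h'
  ext u
  rw [Subgraph.verts_sup, Subgraph.induce_verts, Set.mem_union, Set.mem_compl_iff]
  by_cases hu : u ∈ Y
  · simp only [Set.mem_insert_iff, hu, or_true, true_iff]
    exact fun h => hSY u h hu
  by_cases hne : u = u₀
  · subst hne
    have : .inl ⟨u, hu⟩ ∉ T := by simpa [hv] using N.edge_vert hz.symm
    simp [(hT u hu).not.1 this]
  · simp [hmem u hu hne, hu, hne]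

end SimpleGraph

namespace SimpleGraph.Walk.IsCycle

variable {V : Type*} {G : SimpleGraph V} {Y : Set V} {v : V} {C : G.Walk v v}

lemma hasPM_delVerts_of_forall_notMem (hC : C.IsCycle) (ht : tightCut G Y)
    (hcover : ∀ e ∈ G.edgeSet, ∃ M : G.Subgraph, M.IsPerfectMatching ∧ e ∈ M.edgeSet)
    (hcc : cycleConformal (contractSet G Y)) (heven : Even C.length)
    (hCY : ∀ w ∈ C.support, w ∉ Y) : hasPM (delVerts G {x | x ∈ C.support}) :=
  hasPM_delVerts_of_contractSet_inr_notMem ht hcover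
    (C.inr_notMem_support_toContractSet hCY)
    (fun w hw => C.inl_mem_support_toContractSet hCY hw) hCY
    (hcc.2 _ _ (hC.toContractSet hCY) (by rwa [length_toContractSet]))

lemma hasPM_delVerts_of_exists_mem [Finite V] (hC : C.IsCycle) (ht : tightCut G Y)
    (hcover : ∀ e ∈ G.edgeSet, ∃ M : G.Subgraph, M.IsPerfectMatching ∧ e ∈ M.edgeSet)
    (c : G.Coloring Bool) (hfin : (cutSet G Y).Finite) (hcard : (cutSet G Y).ncard < 4)
    (hdistinct : ∀ a b a' b' : V, s(a, b) ∈ cutSet G Y → s(a', b') ∈ cutSet G Y →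
      s(a, b) ≠ s(a', b') → a ≠ a')
    (hcc₁ : cycleConformal (contractSet G Y)) (hcc₂ : cycleConformal (contractSet G Yᶜ))
    (heven : Even C.length) (hv : v ∉ Y) (hY : ∃ w ∈ C.support, w ∈ Y) :
    hasPM (delVerts G {x | x ∈ C.support}) := by
  obtain ⟨a₁, b₁, a₂, b₂, h₁, h₂, Q, P, hcyc, hlen, hsupp, hQ, hP⟩ :=
    hC.exists_cons_append_cons hv hY hfin hcard
  have ha₁ := hQ a₁ Q.start_mem_support
  have ha₂ := hQ a₂ Q.end_mem_support
  have hb₁ := hP b₁ P.end_mem_support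
  have hb₂ := hP b₂ P.start_mem_support
  obtain ⟨hpath, hnot⟩ := (cons_isCycle_iff _ _).1 hcyc
  have hne : s(a₁, b₁) ≠ s(a₂, b₂) := fun h => hnot (by simp [Sym2.eq_swap, h])
  have hcut₁ : s(a₁, b₁) ∈ cutSet G Y := mem_cutSet_iff.2 ⟨h₁.symm, by tauto⟩
  have hcut₂ : s(a₂, b₂) ∈ cutSet G Y := mem_cutSet_iff.2 ⟨h₂, by tauto⟩
  have ha : a₁ ≠ a₂ := hdistinct _ _ _ _ hcut₁ hcut₂ hne
  have hb : b₁ ≠ b₂ := hdistinct _ _ _ _ (Sym2.eq_swap ▸ hcut₁) (Sym2.eq_swap ▸ hcut₂)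
    (by rwa [Sym2.eq_swap, Sym2.eq_swap (a := b₂)])
  have hQeven : Even Q.length :=
    (c.even_length_iff_congr Q).2 (by rw [ht.color_eq hcover c h₁.symm ha₁ hb₁ h₂ ha₂ hb₂])
  obtain ⟨W₁, hW₁, hW₁len, hW₁supp⟩ :=
    hpath.of_append_right.of_cons.exists_isCycle_contractSet hP hb.symm ha₂ ha₁ h₂.symm h₁
  obtain ⟨W₂, hW₂, hW₂len, hW₂supp⟩ := hpath.of_append_left.exists_isCycle_contractSet (Y := Yᶜ)
    (fun w hw => not_not.2 (hQ w hw)) ha hb₁ hb₂ h₁.symm h₂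
  obtain ⟨k, hk⟩ := heven
  obtain ⟨m, hm⟩ := hQeven
  refine hasPM_delVerts_of_contractSet_inr_mem W₁.start_mem_support W₂.start_mem_support
    (fun w hw => ?_) (fun w hw => ?_) (hcc₁.2 _ W₁ hW₁ ⟨k - m, by omega⟩)
    (hcc₂.2 _ W₂ hW₂ ⟨m + 1, by omega⟩)
  · have := mt (hQ w) hw
    change _ ∈ W₁.support ↔ w ∈ C.support
    rw [hW₁supp, hsupp]
    tauto
  · have := mt (hP w) hw
    change _ ∈ W₂.support ↔ w ∈ C.support
    rw [hW₂supp, hsupp]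
    tauto

end SimpleGraph.Walk.IsCycle

theorem cubic_tightCut_cycleConformal_general {V : Type*} (G : SimpleGraph V)
    (X : Set V)
    (hmc : matchingCovered G) (hbip : G.Colorable 2) (ht : tightCut G X)
    (hcard : (cutSet G X).ncard = 3)
    (hind : ∀ a b c d : V, s(a, b) ∈ cutSet G X → s(c, d) ∈ cutSet G X →
      s(a, b) ≠ s(c, d) → a ≠ c ∧ ¬ G.Adj a c)
    (h1 : cycleConformal (contractSet G X))
    (h2 : cycleConformal (contractSet G Xᶜ)) :
    cycleConformal G := by
  obtain ⟨hcard4, -, hPM, hcover⟩ := hmc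
  have : Finite V := Nat.finite_of_card_ne_zero (by omega)
  obtain ⟨c⟩ := hbip
  have hfin : (cutSet G X).Finite := Set.finite_of_ncard_ne_zero (by omega)
  have hdistinct (a b a' b' : V) (h : s(a, b) ∈ cutSet G X) (h' : s(a', b') ∈ cutSet G X)
      (hne : s(a, b) ≠ s(a', b')) : a ≠ a' := (hind a b a' b' h h' hne).1
  refine ⟨hPM, fun v C hC heven => ?_⟩
  by_cases hX : ∀ w ∈ C.support, w ∉ X
  · exact hC.hasPM_delVerts_of_forall_notMem ht hcover h1 heven hX
  by_cases hXc : ∀ w ∈ C.support, w ∉ Xᶜ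
  · exact hC.hasPM_delVerts_of_forall_notMem ht.compl hcover h2 heven hXc
  push Not at hX hXc
  by_cases hv : v ∈ X
  · exact hC.hasPM_delVerts_of_exists_mem ht.compl hcover (recolorOfEquiv G finTwoEquiv c)
      (by rwa [cutSet_compl]) (by rw [cutSet_compl]; omega) (by rwa [cutSet_compl])
      h2 (by rwa [compl_compl]) heven (not_not.2 hv) hXc
  · exact hC.hasPM_delVerts_of_exists_mem ht hcover (recolorOfEquiv G finTwoEquiv c) hfin
      (by omega) hdistinct h1 h2 heven hv hX

/-- Let `G` be a cubic, matching covered, bipartite graph with a tight cut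
`∂(X)` that is an induced matching of exactly 3 edges. If both tight cut
contractions are cycle-conformal, then so is `G`. -/
theorem cubic_tightCut_cycleConformal {V : Type*} (G : SimpleGraph V)
    (X : Set V)
    (hcubic : ∀ v : V, (G.neighborSet v).ncard = 3)
    (hmc : matchingCovered G) (hbip : G.Colorable 2) (ht : tightCut G X)
    (hcard : (cutSet G X).ncard = 3)
    (hind : ∀ a b c d : V, s(a, b) ∈ cutSet G X → s(c, d) ∈ cutSet G X →
      s(a, b) ≠ s(c, d) → a ≠ c ∧ ¬ G.Adj a c)
    (h1 : cycleConformal (contractSet G X))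
    (h2 : cycleConformal (contractSet G Xᶜ)) :
    cycleConformal G :=
  cubic_tightCut_cycleConformal_general G X hmc hbip ht hcard hind h1 h2
end
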